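/- Let M be a real symmetric positive semidefinite N×N matrix with ℓ²-operator norm (spectral radius) ρ > 0. Let v₀ ∈ {−1, 1}^N and v(τ) = exp(−τ M) v₀. If 0 ≤ τ < ρ^{−1} log(1 + N^{−1/2}), then v(τ)_i has the same (strict) sign as (v₀)_i for every i: (v₀)_i · v(τ)_i > 0. Consequently, for two communities the MBO iteration is guaranteed to be stationary for any timestep below this bound. -/

import Mathlib

/-!
The operator `exp (-τ M) - 1` has ℓ²-operator norm at most `e^{τρ} - 1 < N^{-1/2}`, while the
±1-vector `v₀` has Euclidean norm `√N`. Hence `v(τ) - v₀` has Euclidean norm, and so every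
coordinate has absolute value, less than `1`, which is too small to flip the sign of a ±1 entry.
-/

open Finset Matrix

open Nat in
theorem NormedSpace.norm_exp_sub_one_le {𝔸 : Type*} [NormedRing 𝔸] [NormedAlgebra ℝ 𝔸]
    [CompleteSpace 𝔸] (x : 𝔸) : ‖exp x - 1‖ ≤ Real.exp ‖x‖ - 1 := by
  have hsum : Summable fun n : ℕ => (n !⁻¹ : ℝ) • x ^ n := expSeries_summable' x
  have hsum_norm : Summable fun n : ℕ => ‖x‖ ^ (n + 1) / (n + 1)! :=
    (summable_nat_add_iff 1).2 (Real.summable_pow_div_factorial ‖x‖)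
  have hexp : exp x - 1 = ∑' n : ℕ, ((n + 1)!⁻¹ : ℝ) • x ^ (n + 1) := by
    rw [exp_eq_tsum ℝ]
    dsimp only
    rw [hsum.tsum_eq_zero_add]
    simp
  have hrexp : Real.exp ‖x‖ - 1 = ∑' n : ℕ, ‖x‖ ^ (n + 1) / (n + 1)! := by
    rw [Real.exp_eq_exp_ℝ, exp_eq_tsum_div]
    dsimp only
    rw [(Real.summable_pow_div_factorial ‖x‖).tsum_eq_zero_add]
    simp
  rw [hexp, hrexp]
  refine tsum_of_norm_bounded hsum_norm.hasSum fun n => ?_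
  rw [norm_smul, Real.norm_of_nonneg (by positivity), div_eq_inv_mul]
  exact mul_le_mul_of_nonneg_left (norm_pow_le' x n.succ_pos) (by positivity)

theorem Matrix.toEuclideanCLM_exp {n 𝕜 : Type*} [Fintype n] [DecidableEq n] [RCLike 𝕜]
    (A : Matrix n n 𝕜) :
    toEuclideanCLM (n := n) (𝕜 := 𝕜) (NormedSpace.exp A) =
      NormedSpace.exp (toEuclideanCLM (n := n) (𝕜 := 𝕜) A) := by
  open scoped Matrix.Norms.L2Operator in
  let _ : NormedAlgebra ℚ (Matrix n n 𝕜) := NormedAlgebra.restrictScalars ℚ 𝕜 _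
  exact NormedSpace.map_exp (toEuclideanCLM (n := n) (𝕜 := 𝕜))
    (LinearMap.continuous_of_finiteDimensional
      (toEuclideanCLM (n := n) (𝕜 := 𝕜)).toAlgEquiv.toLinearMap) A

theorem EuclideanSpace.norm_eq_sqrt_card_of_forall_abs_eq_one {ι : Type*} [Fintype ι]
    {u : EuclideanSpace ℝ ι} (hu : ∀ i, |u i| = 1) : ‖u‖ = √(Fintype.card ι) := by
  simp [EuclideanSpace.norm_eq, hu]

theorem mul_pos_of_abs_eq_one_of_abs_sub_lt_one {a b : ℝ} (ha : |a| = 1) (hab : |b - a| < 1) :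
    0 < a * b := by
  have h : a * b = a * a + a * (b - a) := by ring
  have haa : a * a = 1 := by rw [← abs_mul_self, abs_mul, ha, one_mul]
  have hlow : -1 < a * (b - a) := (abs_lt.1 (by rwa [abs_mul, ha, one_mul])).1
  linarith

theorem EuclideanSpace.mul_apply_pos_of_norm_sub_lt_one {ι : Type*} [Fintype ι]
    {u w : EuclideanSpace ℝ ι} (hu : ∀ i, |u i| = 1) (hw : ‖w - u‖ < 1) (i : ι) :
    0 < u i * w i :=
  mul_pos_of_abs_eq_one_of_abs_sub_lt_one (hu i) ((PiLp.norm_apply_le (w - u) i).trans_lt hw)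

theorem exp_mul_sub_one_lt_of_lt_inv_mul_log {τ ρ s : ℝ} (hρ : 0 < ρ) (hs : 0 < s)
    (hτ : τ < ρ⁻¹ * Real.log (1 + s)) : Real.exp (τ * ρ) - 1 < s := by
  have hlog : ρ * τ < Real.log (1 + s) := (lt_inv_mul_iff₀ hρ).1 hτ
  have := (Real.lt_log_iff_exp_lt (by linarith)).1 (mul_comm τ ρ ▸ hlog)
  linarith

theorem mbo_stationary_spectral_bound_general
    {N : ℕ}
    (M : Matrix (Fin N) (Fin N) ℝ)
    (ρ : ℝ)
    (hρ : ρ = ‖LinearMap.toContinuousLinearMap (Matrix.toEuclideanLin M)‖)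
    (hρpos : 0 < ρ)
    (v₀ : Fin N → ℝ) (hv₀ : ∀ i, v₀ i = 1 ∨ v₀ i = -1)
    (τ : ℝ) (hτ : 0 ≤ τ)
    (hτlt : τ < ρ⁻¹ * Real.log (1 + (Real.sqrt N)⁻¹)) :
    ∀ i, 0 < v₀ i * (NormedSpace.exp (-(τ • M))).mulVec v₀ i := by
  intro i
  set T := toEuclideanCLM (n := Fin N) (𝕜 := ℝ) M
  set E := NormedSpace.exp (-(τ • T))
  set u := WithLp.toLp 2 v₀
  have hu : ∀ j, |u j| = 1 := fun j => by rcases hv₀ j with h | h <;> simp [u, h]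
  have hsqrt : 0 < √(N : ℝ) := Real.sqrt_pos.2 (by exact_mod_cast i.pos)
  have hu_norm : ‖u‖ = √N := by
    simpa using EuclideanSpace.norm_eq_sqrt_card_of_forall_abs_eq_one hu
  have hE : ‖E - 1‖ < (√N)⁻¹ := by
    refine (NormedSpace.norm_exp_sub_one_le _).trans_lt ?_
    rw [norm_neg, norm_smul, Real.norm_of_nonneg hτ]
    exact exp_mul_sub_one_lt_of_lt_inv_mul_log (hρ ▸ hρpos) (inv_pos.2 hsqrt) (hρ ▸ hτlt)
  have hEu : ‖E u - u‖ < 1 :=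
    calc ‖E u - u‖ = ‖(E - 1) u‖ := rfl
      _ ≤ ‖E - 1‖ * ‖u‖ := (E - 1).le_opNorm u
      _ < (√N)⁻¹ * √N := by rw [hu_norm]; exact mul_lt_mul_of_pos_right hE hsqrt
      _ = 1 := inv_mul_cancel₀ hsqrt.ne'
  have hE_matrix :
      E = toEuclideanCLM (n := Fin N) (𝕜 := ℝ) (NormedSpace.exp (-(τ • M))) := by
    rw [toEuclideanCLM_exp, map_neg, map_smul]
  rw [hE_matrix, toEuclideanCLM_toLp] at hEu
  exact EuclideanSpace.mul_apply_pos_of_norm_sub_lt_one hu hEu i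

theorem mbo_stationary_spectral_bound
    {N : ℕ}
    (M : Matrix (Fin N) (Fin N) ℝ) (hMpsd : M.PosSemidef)
    (ρ : ℝ)
    (hρ : ρ = ‖LinearMap.toContinuousLinearMap (Matrix.toEuclideanLin M)‖)
    (hρpos : 0 < ρ)
    (v₀ : Fin N → ℝ) (hv₀ : ∀ i, v₀ i = 1 ∨ v₀ i = -1)
    (τ : ℝ) (hτ : 0 ≤ τ)
    (hτlt : τ < ρ⁻¹ * Real.log (1 + (Real.sqrt N)⁻¹)) :
    ∀ i, 0 < v₀ i * (NormedSpace.exp (-(τ • M))).mulVec v₀ i :=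
  mbo_stationary_spectral_bound_general M ρ hρ hρpos v₀ hv₀ τ hτ hτlt
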